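/- arXiv:2507.05851 — 2 statements merged into one kernel-verified Lean document; each statement's English description precedes it below -/
import Mathlib

section
/- Pointwise estimate for the homotopy operator: for a k+1-form ω = ∑_j f_j dx^j on B(r) ⊂ ℝ^n and Sω(x) = ∫₀¹ t^k ω(tx)⟨x, ·⟩ dt, one has |Sω|_x ≤ r √(binom(n,k+1)) ∫₀¹ t^k |ω|_{tx} dt for every x ∈ B(r). -/
/-!
The coefficients of `Sω(x)` are those of the interior product `ι_x F` of the
coefficientwise integral `F = ∫₀¹ t^k ω(tx) dt`, so it suffices to bound `ι_x` pointwise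
and then move the Euclidean norm inside the integral. For a `(k+1)`-vector `F`, Cauchy–Schwarz
with weights `|F_{β∪a}|` gives `|(ι_x F)_β|² ≤ (∑_{a∉β} x_a² |F_{β∪a}|) ‖F‖₁`, since
`a ↦ β ∪ {a}` is injective. Summing over `β` and regrouping the pairs `(β, a)` by
`u = β ∪ {a}` bounds `‖ι_x F‖²` by `|x|² ‖F‖₁²`, and `‖F‖₁ ≤ √C(n,k+1) ‖F‖₂`.
-/

open MeasureTheory

/-- A measurable differential `k`-form on a domain in `ℝⁿ`, represented by its
coefficient functions over `k`-element subsets of `Fin n`. -/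
def DiffForm (n k : ℕ) : Type :=
  EuclideanSpace ℝ (Fin n) → {s : Finset (Fin n) // s.card = k} → ℝ

/-- Pointwise (Euclidean) norm of the coefficient vector of a form. -/
noncomputable def formPtNorm {n k : ℕ} (ω : DiffForm n k) (x : EuclideanSpace ℝ (Fin n)) : ℝ :=
  Real.sqrt (∑ j, (ω x j) ^ 2)

/-- The homotopy operator `S` sending `(k+1)`-forms to `k`-forms,
`Sω(x) = ∫₀¹ t^k ω(tx)⟨x, ·⟩ dt`, in coefficients. -/
noncomputable def homotopyS {n k : ℕ} (ω : DiffForm n (k + 1)) : DiffForm n k :=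
  fun x β => ∑ a ∈ β.1ᶜ.attach,
    (-1 : ℝ) ^ ((β.1.filter (· < a.1)).card) * x a.1 *
      ∫ t in (0:ℝ)..1, t ^ k * ω (t • x)
        ⟨insert a.1 β.1, by
          rw [Finset.card_insert_of_notMem (Finset.mem_compl.mp a.2), β.2]⟩

namespace Finset

variable {α : Type*} [Fintype α] [DecidableEq α] {k : ℕ}

def insertOfNotMem (β : {s : Finset α // s.card = k}) (a : {a // a ∈ β.1ᶜ}) :
    {s : Finset α // s.card = k + 1} :=
  ⟨insert a.1 β.1, by rw [card_insert_of_notMem (mem_compl.mp a.2), β.2]⟩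

theorem insertOfNotMem_injective (β : {s : Finset α // s.card = k}) :
    Function.Injective (insertOfNotMem β) := by
  intro a b hab
  have ha : a.1 ∈ (insertOfNotMem β b).1 := hab ▸ mem_insert_self _ _
  exact Subtype.ext ((mem_insert.mp ha).resolve_right (mem_compl.mp a.2))

theorem sum_attach_insertOfNotMem_le {M : Type*} [AddCommMonoid M] [PartialOrder M]
    [IsOrderedAddMonoid M] {f : {s : Finset α // s.card = k + 1} → M}
    (hf : ∀ u, 0 ≤ f u) (β : {s : Finset α // s.card = k}) :
    ∑ a ∈ β.1ᶜ.attach, f (insertOfNotMem β a) ≤ ∑ u, f u := by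
  rw [← sum_image fun a _ b _ hab => insertOfNotMem_injective β hab]
  exact sum_le_univ_sum_of_nonneg hf

theorem sum_sum_attach_insertOfNotMem {M : Type*} [AddCommMonoid M]
    (f : {s : Finset α // s.card = k + 1} → α → M) :
    ∑ β : {s : Finset α // s.card = k}, ∑ a ∈ β.1ᶜ.attach, f (insertOfNotMem β a) a =
      ∑ u : {s : Finset α // s.card = k + 1}, ∑ a ∈ u.1, f u a := by
  rw [sum_sigma', sum_sigma']
  refine sum_bij' (fun p _ => ⟨insertOfNotMem p.1 p.2, p.2.1⟩)
    (fun q hq => ⟨⟨q.1.1.erase q.2, by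
      rw [card_erase_of_mem (mem_sigma.mp hq).2, q.1.2, Nat.add_sub_cancel]⟩,
      ⟨q.2, mem_compl.mpr (notMem_erase _ _)⟩⟩) ?_ ?_ ?_ ?_ ?_
  · intro p _
    simp [insertOfNotMem]
  · intro q _
    simp
  · rintro ⟨β, a⟩ _
    exact Sigma.subtype_ext (Subtype.ext (erase_insert (mem_compl.mp a.2))) rfl
  · rintro ⟨u, a⟩ hq
    exact Sigma.ext (Subtype.ext (insert_erase (mem_sigma.mp hq).2)) HEq.rfl
  · intro p _
    rfl

end Finset

open Finset

section InteriorProduct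

variable {α : Type*} [Fintype α] [LinearOrder α] {k : ℕ}

noncomputable def interiorProduct (x : EuclideanSpace ℝ α)
    (F : {s : Finset α // s.card = k + 1} → ℝ) (β : {s : Finset α // s.card = k}) : ℝ :=
  ∑ a ∈ β.1ᶜ.attach, (-1 : ℝ) ^ (β.1.filter (· < a.1)).card * x a.1 * F (insertOfNotMem β a)

theorem sq_interiorProduct_le (x : EuclideanSpace ℝ α)
    (F : {s : Finset α // s.card = k + 1} → ℝ) (β : {s : Finset α // s.card = k}) :
    interiorProduct x F β ^ 2 ≤
      (∑ a ∈ β.1ᶜ.attach, x a.1 ^ 2 * |F (insertOfNotMem β a)|) * ∑ u, |F u| := by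
  refine (sum_sq_le_sum_mul_sum_of_sq_le_mul _
    (f := fun a => x a.1 ^ 2 * |F (insertOfNotMem β a)|)
    (g := fun a => |F (insertOfNotMem β a)|)
    (fun a _ => by positivity) (fun a _ => abs_nonneg _) fun a _ => le_of_eq ?_).trans ?_
  · rw [mul_pow, mul_pow, ← pow_mul, pow_mul', neg_one_sq, one_pow, ← sq_abs (F _)]
    ring
  · exact mul_le_mul_of_nonneg_left (sum_attach_insertOfNotMem_le (f := fun u => |F u|)
      (fun _ => abs_nonneg _) β)
      (sum_nonneg fun _ _ => by positivity)

theorem sum_sum_sq_mul_abs_insertOfNotMem_le (x : EuclideanSpace ℝ α)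
    (F : {s : Finset α // s.card = k + 1} → ℝ) :
    ∑ β : {s : Finset α // s.card = k}, ∑ a ∈ β.1ᶜ.attach, x a.1 ^ 2 * |F (insertOfNotMem β a)|
      ≤ ‖x‖ ^ 2 * ∑ u, |F u| := by
  rw [sum_sum_attach_insertOfNotMem (fun u a => x a ^ 2 * |F u|), mul_sum]
  refine sum_le_sum fun u _ => ?_
  rw [← sum_mul, EuclideanSpace.norm_sq_eq]
  refine mul_le_mul_of_nonneg_right ?_ (abs_nonneg _)
  simpa only [Real.norm_eq_abs, sq_abs] using
    sum_le_univ_sum_of_nonneg (s := u.1) fun a => sq_nonneg (x a)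

theorem norm_interiorProduct_le (x : EuclideanSpace ℝ α)
    (F : {s : Finset α // s.card = k + 1} → ℝ) :
    ‖WithLp.toLp 2 (interiorProduct x F)‖ ≤
      ‖x‖ * √((Fintype.card α).choose (k + 1)) * ‖WithLp.toLp 2 F‖ := by
  set A := ∑ u, |F u|
  have hA : A ^ 2 ≤ (Fintype.card α).choose (k + 1) * ‖WithLp.toLp 2 F‖ ^ 2 := by
    simpa [EuclideanSpace.norm_sq_eq, A, Fintype.card_finset_len] using
      sq_sum_le_card_mul_sum_sq (s := univ) (f := fun u => |F u|)
  refine le_of_pow_le_pow_left₀ two_ne_zero (by positivity) ?_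
  calc ‖WithLp.toLp 2 (interiorProduct x F)‖ ^ 2
      = ∑ β, interiorProduct x F β ^ 2 := by simp [EuclideanSpace.norm_sq_eq]
    _ ≤ ∑ β, (∑ a ∈ β.1ᶜ.attach, x a.1 ^ 2 * |F (insertOfNotMem β a)|) * A :=
      sum_le_sum fun β _ => sq_interiorProduct_le x F β
    _ ≤ ‖x‖ ^ 2 * A * A := by
      rw [← sum_mul]
      exact mul_le_mul_of_nonneg_right (sum_sum_sq_mul_abs_insertOfNotMem_le x F)
        (sum_nonneg fun _ _ => abs_nonneg _)
    _ ≤ ‖x‖ ^ 2 * ((Fintype.card α).choose (k + 1) * ‖WithLp.toLp 2 F‖ ^ 2) := by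
      rw [mul_assoc, ← sq]
      exact mul_le_mul_of_nonneg_left hA (by positivity)
    _ = (‖x‖ * √((Fintype.card α).choose (k + 1)) * ‖WithLp.toLp 2 F‖) ^ 2 := by
      rw [mul_pow, mul_pow, Real.sq_sqrt (Nat.cast_nonneg _)]
      ring

end InteriorProduct

theorem norm_toLp_intervalIntegral_le {ι : Type*} [Fintype ι] {q : ENNReal} [Fact (1 ≤ q)]
    {g : ℝ → ι → ℝ} {a b : ℝ} (hab : a ≤ b)
    (hg : ∀ i, IntervalIntegrable (fun t => g t i) volume a b) :
    ‖WithLp.toLp q (fun i => ∫ t in a..b, g t i)‖ ≤ ∫ t in a..b, ‖WithLp.toLp q (g t)‖ := by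
  have hint : WithLp.toLp q (fun i => ∫ t in a..b, g t i) = ∫ t in a..b, WithLp.toLp q (g t) := by
    ext i
    simp only [intervalIntegral.integral_of_le hab]
    exact (eval_integral_piLp (f := fun t => WithLp.toLp q (g t))
      (fun i => ((intervalIntegrable_iff_integrableOn_Ioc_of_le hab).mp (hg i))) i).symm
  rw [hint]
  exact intervalIntegral.norm_integral_le_integral_norm hab

theorem homotopyS_eq_interiorProduct {n k : ℕ} (ω : DiffForm n (k + 1))
    (x : EuclideanSpace ℝ (Fin n)) :
    homotopyS ω x = interiorProduct x (fun j => ∫ t in (0:ℝ)..1, t ^ k * ω (t • x) j) :=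
  rfl

theorem formPtNorm_eq_norm_toLp {n k : ℕ} (ω : DiffForm n k) (x : EuclideanSpace ℝ (Fin n)) :
    formPtNorm ω x = ‖WithLp.toLp 2 (ω x)‖ := by
  simp [formPtNorm, EuclideanSpace.norm_eq, sq_abs]

theorem homotopy_pointwise_bound_general (n k : ℕ) (r : ℝ)
    (ω : DiffForm n (k + 1))
    (hint₁ : ∀ x ∈ Metric.ball (0 : EuclideanSpace ℝ (Fin n)) r, ∀ j,
      IntervalIntegrable (fun t => t ^ k * ω (t • x) j) volume 0 1) :
    ∀ x ∈ Metric.ball (0 : EuclideanSpace ℝ (Fin n)) r,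
      formPtNorm (homotopyS ω) x
        ≤ r * Real.sqrt (n.choose (k + 1)) *
          ∫ t in (0:ℝ)..1, t ^ k * formPtNorm ω (t • x) := by
  intro x hx
  have hω : ∀ t ∈ Set.uIcc (0:ℝ) 1,
      ‖WithLp.toLp 2 (fun j => t ^ k * ω (t • x) j)‖ = t ^ k * formPtNorm ω (t • x) := by
    intro t ht
    have hscale : (fun j => t ^ k * ω (t • x) j) = t ^ k • ω (t • x) := rfl
    rw [hscale, WithLp.toLp_smul, norm_smul, formPtNorm_eq_norm_toLp,
      Real.norm_of_nonneg (pow_nonneg (Set.uIcc_of_le (zero_le_one' ℝ) ▸ ht).1 k)]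
  calc formPtNorm (homotopyS ω) x
      ≤ ‖x‖ * √(n.choose (k + 1)) *
          ‖WithLp.toLp 2 (fun j => ∫ t in (0:ℝ)..1, t ^ k * ω (t • x) j)‖ := by
        simpa [formPtNorm_eq_norm_toLp, homotopyS_eq_interiorProduct] using
          norm_interiorProduct_le x _
    _ ≤ ‖x‖ * √(n.choose (k + 1)) * ∫ t in (0:ℝ)..1, t ^ k * formPtNorm ω (t • x) := by
        gcongr
        rw [← intervalIntegral.integral_congr hω]
        exact norm_toLp_intervalIntegral_le zero_le_one (hint₁ x hx)
    _ ≤ r * √(n.choose (k + 1)) * ∫ t in (0:ℝ)..1, t ^ k * formPtNorm ω (t • x) := by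
        gcongr
        · exact intervalIntegral.integral_nonneg zero_le_one
            fun t ht => mul_nonneg (pow_nonneg ht.1 k) (Real.sqrt_nonneg _)
        · exact (mem_ball_zero_iff.mp hx).le

/-- **Pointwise estimate for the homotopy operator:** for a `(k+1)`-form `ω` on
`B(r) ⊆ ℝⁿ` and every `x ∈ B(r)`,
`|Sω|_x ≤ r √(C(n,k+1)) ∫₀¹ t^k |ω|_{tx} dt`. -/
theorem homotopy_pointwise_bound (n k : ℕ) (r : ℝ) (hr : 0 < r)
    (ω : DiffForm n (k + 1))
    (hint₁ : ∀ x ∈ Metric.ball (0 : EuclideanSpace ℝ (Fin n)) r, ∀ j,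
      IntervalIntegrable (fun t => t ^ k * ω (t • x) j) volume 0 1)
    (hint₂ : ∀ x ∈ Metric.ball (0 : EuclideanSpace ℝ (Fin n)) r,
      IntervalIntegrable (fun t => t ^ k * formPtNorm ω (t • x)) volume 0 1) :
    ∀ x ∈ Metric.ball (0 : EuclideanSpace ℝ (Fin n)) r,
      formPtNorm (homotopyS ω) x
        ≤ r * Real.sqrt (n.choose (k + 1)) *
          ∫ t in (0:ℝ)..1, t ^ k * formPtNorm ω (t • x) :=
  homotopy_pointwise_bound_general n k r ω hint₁
end

section
/- Let β: U → V be a C-bi-Lipschitz homeomorphism between subsets of ℝ^n (with |β(x)-β(x')| ≤ C|x-x'| and inverse α with |α(y)-α(y')| ≤ (1/C)|y-y'|). Then the pull-back operator β* on L^p k-forms is bounded with norm ‖β*‖ ≤ (n!^{(p+1)/p}/(n-k)!) · C^{(pk-n)/p}, and similarly ‖α*‖ ≤ (n!^{(p+1)/p}/(n-k)!) · C^{(n-pk)/p}. -/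
/-!
The pointwise estimate comes from the Leibniz expansion: every `k × k` minor of a linear map of
operator norm `L` is at most `k! L^k`, and Cauchy–Schwarz over the `n.choose k` increasing
multi-indices gives `|β*ω|_x ≤ (n!/(n-k)!) ‖dβ_x‖^k |ω|_{β x}`. At Lebesgue density points a
Lipschitz bound on a set passes to the derivative, so `‖dβ‖ ≤ C` a.e. on `U`, and
`|det dα| ≤ n! C^{-n}` a.e. on `V`. Since `U = α '' V`, changing variables through `α` (rather
than `β`) turns `∫_U |ω ∘ β|^p` into `∫_V |det dα| |ω|^p`: only an upper bound on a Jacobian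
is needed, so no chain rule for `α ∘ β = id` on the possibly thin set `U` is involved. The bound
for `α*` is the same estimate with `(β, C)` and `(α, 1/C)` exchanged.
-/

open MeasureTheory

/-- Pointwise Euclidean (ℓ²) norm of a coefficient vector indexed by a finite type. -/
noncomputable def coeffNorm {ι : Type*} [Fintype ι] (v : ι → ℝ) : ℝ :=
  Real.sqrt (∑ i, v i ^ 2)

/-- The `k × k` minor of the Jacobian `D` for increasing multi-indices `i, j`. -/
noncomputable def jacMinor (n k : ℕ)
    (D : EuclideanSpace ℝ (Fin n) →L[ℝ] EuclideanSpace ℝ (Fin n))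
    (i j : {s : Finset (Fin n) // s.card = k}) : ℝ :=
  Matrix.det (Matrix.of fun a b : Fin k =>
    D (EuclideanSpace.single ((i.1.orderIsoOfFin i.2 b : {x // x ∈ i.1}) : Fin n) 1)
      ((j.1.orderIsoOfFin j.2 a : {x // x ∈ j.1}) : Fin n))

open Set

section CoeffNorm

variable {ι κ : Type*} [Fintype ι] [Fintype κ]

lemma coeffNorm_nonneg (v : ι → ℝ) : 0 ≤ coeffNorm v := Real.sqrt_nonneg _

lemma coeffNorm_rpow_nonneg (v : ι → ℝ) (p : ℝ) : 0 ≤ coeffNorm v ^ p :=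
  Real.rpow_nonneg (coeffNorm_nonneg v) p

lemma coeffNorm_sq (v : ι → ℝ) : coeffNorm v ^ 2 = ∑ i, v i ^ 2 :=
  Real.sq_sqrt (by positivity)

lemma coeffNorm_sum_mul_le {M : ι → κ → ℝ} {m : ℝ} (hm : 0 ≤ m) (hM : ∀ i j, |M i j| ≤ m)
    (w : κ → ℝ) :
    coeffNorm (fun i => ∑ j, w j * M i j)
      ≤ √(Fintype.card ι * Fintype.card κ) * m * coeffNorm w := by
  have hrow : ∀ i, ∑ j, M i j ^ 2 ≤ Fintype.card κ * m ^ 2 := fun i =>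
    calc ∑ j, M i j ^ 2 ≤ ∑ _j : κ, m ^ 2 :=
          Finset.sum_le_sum fun j _ => sq_le_sq' (abs_le.1 (hM i j)).1 (abs_le.1 (hM i j)).2
      _ = Fintype.card κ * m ^ 2 := by simp
  refine (pow_le_pow_iff_left₀ (coeffNorm_nonneg _)
    (mul_nonneg (by positivity) (coeffNorm_nonneg w)) two_ne_zero).1 ?_
  calc coeffNorm (fun i => ∑ j, w j * M i j) ^ 2
      = ∑ i, (∑ j, w j * M i j) ^ 2 := coeffNorm_sq _
    _ ≤ ∑ i, (∑ j, w j ^ 2) * ∑ j, M i j ^ 2 :=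
        Finset.sum_le_sum fun i _ => Finset.sum_mul_sq_le_sq_mul_sq _ _ _
    _ ≤ ∑ _i : ι, coeffNorm w ^ 2 * (Fintype.card κ * m ^ 2) :=
        Finset.sum_le_sum fun i _ => by
          rw [coeffNorm_sq]; exact mul_le_mul_of_nonneg_left (hrow i) (by positivity)
    _ = (√(Fintype.card ι * Fintype.card κ) * m * coeffNorm w) ^ 2 := by
        rw [mul_pow, mul_pow, Real.sq_sqrt (by positivity)]
        simp only [Finset.sum_const, Finset.card_univ, nsmul_eq_mul]
        ring

end CoeffNorm

section Minors

variable {n : ℕ}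

lemma abs_apply_single_le_opNorm
    (L : EuclideanSpace ℝ (Fin n) →L[ℝ] EuclideanSpace ℝ (Fin n)) (i j : Fin n) :
    |L (EuclideanSpace.single i 1) j| ≤ ‖L‖ :=
  calc |L (EuclideanSpace.single i 1) j| ≤ ‖L (EuclideanSpace.single i 1)‖ := by
        rw [← Real.norm_eq_abs]; exact PiLp.norm_apply_le _ j
    _ ≤ ‖L‖ := by simpa using L.le_opNorm (EuclideanSpace.single i 1)

lemma abs_jacMinor_le {k : ℕ} (L : EuclideanSpace ℝ (Fin n) →L[ℝ] EuclideanSpace ℝ (Fin n))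
    (i j : {s : Finset (Fin n) // s.card = k}) :
    |jacMinor n k L i j| ≤ k.factorial * ‖L‖ ^ k := by
  unfold jacMinor
  refine (Matrix.det_le (abv := AbsoluteValue.abs) (x := ‖L‖) fun a b => ?_).trans_eq (by simp)
  exact abs_apply_single_le_opNorm L _ _

lemma abs_det_le (L : EuclideanSpace ℝ (Fin n) →L[ℝ] EuclideanSpace ℝ (Fin n)) :
    |L.det| ≤ n.factorial * ‖L‖ ^ n := by
  let b := (EuclideanSpace.basisFun (Fin n) ℝ).toBasis
  rw [ContinuousLinearMap.det, ← LinearMap.det_toMatrix b]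
  refine (Matrix.det_le (abv := AbsoluteValue.abs) (x := ‖L‖) fun a c => ?_).trans_eq (by simp)
  simpa [b, LinearMap.toMatrix_apply] using abs_apply_single_le_opNorm L c a

lemma coeffNorm_pullback_le {k : ℕ}
    (L : EuclideanSpace ℝ (Fin n) →L[ℝ] EuclideanSpace ℝ (Fin n))
    (w : {s : Finset (Fin n) // s.card = k} → ℝ) :
    coeffNorm (fun i => ∑ j, w j * jacMinor n k L i j)
      ≤ n.descFactorial k * ‖L‖ ^ k * coeffNorm w := by
  have h := coeffNorm_sum_mul_le (by positivity) (abs_jacMinor_le L) w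
  rwa [Fintype.card_finset_len, Fintype.card_fin, Real.sqrt_mul_self (by positivity), ← mul_assoc,
    ← Nat.cast_mul, mul_comm (n.choose k), ← Nat.descFactorial_eq_factorial_mul_choose] at h

end Minors

section AddHaar

variable {E : Type*} [NormedAddCommGroup E] [NormedSpace ℝ E] [FiniteDimensional ℝ E]
  [MeasurableSpace E] [BorelSpace E] (μ : Measure E) [μ.IsAddHaarMeasure]

lemma ae_norm_fderivWithin_le_of_lipschitzOnWith {s : Set E} (hs : MeasurableSet s) {f : E → E}
    {f' : E → E →L[ℝ] E} (hf' : ∀ x ∈ s, HasFDerivWithinAt f (f' x) s x) {K : NNReal}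
    (hf : LipschitzOnWith K f s) : ∀ᵐ x ∂μ.restrict s, ‖f' x‖ ≤ K := by
  have h : ApproximatesLinearOn f (0 : E →L[ℝ] E) s K :=
    LipschitzOnWith.approximatesLinearOn (by simpa using hf)
  filter_upwards [h.norm_fderiv_sub_le μ hs f' hf'] with x hx
  simpa using NNReal.coe_le_coe.2 hx

lemma ae_norm_fderiv_le_of_norm_sub_le {s : Set E} (hs : MeasurableSet s) {f : E → E}
    {f' : E → E →L[ℝ] E} (hf' : ∀ x ∈ s, HasFDerivAt f (f' x) x) {c : ℝ} (hc : 0 ≤ c)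
    (hf : ∀ x ∈ s, ∀ x' ∈ s, ‖f x - f x'‖ ≤ c * ‖x - x'‖) :
    ∀ᵐ x ∂μ.restrict s, ‖f' x‖ ≤ c := by
  have hlip : LipschitzOnWith c.toNNReal f s :=
    LipschitzOnWith.of_dist_le' (by simpa only [dist_eq_norm] using hf)
  simpa [Real.coe_toNNReal c hc] using ae_norm_fderivWithin_le_of_lipschitzOnWith μ hs
    (fun x hx => (hf' x hx).hasFDerivWithinAt) hlip

variable {V : Set E} {α β : E → E} {Dα : E → E →L[ℝ] E}

lemma integrableOn_image_comp_iff (hV : MeasurableSet V) (hβα : LeftInvOn β α V)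
    (hDα : ∀ y ∈ V, HasFDerivWithinAt α (Dα y) V y) (g : E → ℝ) :
    IntegrableOn (fun x => g (β x)) (α '' V) μ ↔
      IntegrableOn (fun y => |(Dα y).det| * g y) V μ := by
  rw [integrableOn_image_iff_integrableOn_abs_det_fderiv_smul μ hV hDα hβα.injOn]
  exact integrableOn_congr_fun (fun y hy => by simp [hβα hy]) hV

lemma setIntegral_image_comp (hV : MeasurableSet V) (hβα : LeftInvOn β α V)
    (hDα : ∀ y ∈ V, HasFDerivWithinAt α (Dα y) V y) (g : E → ℝ) :
    ∫ x in α '' V, g (β x) ∂μ = ∫ y in V, |(Dα y).det| * g y ∂μ := by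
  rw [integral_image_eq_integral_abs_det_fderiv_smul μ hV hDα hβα.injOn]
  exact setIntegral_congr_fun hV fun y hy => by simp [hβα hy]

variable {D : ℝ} {g : E → ℝ}

lemma integrableOn_image_comp_of_abs_det_le (hV : MeasurableSet V) (hβα : LeftInvOn β α V)
    (hDα : ∀ y ∈ V, HasFDerivWithinAt α (Dα y) V y)
    (hdet : ∀ᵐ y ∂μ.restrict V, |(Dα y).det| ≤ D) (hg0 : 0 ≤ g) (hg : IntegrableOn g V μ) :
    IntegrableOn (fun x => g (β x)) (α '' V) μ := by
  rw [integrableOn_image_comp_iff μ hV hβα hDα]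
  have hmeas : AEStronglyMeasurable (fun y => |(Dα y).det|) (μ.restrict V) :=
    (continuous_abs.comp ContinuousLinearMap.continuous_det).measurable.comp_aemeasurable
      (aemeasurable_fderivWithin μ hV hDα) |>.aestronglyMeasurable
  refine (hg.const_mul D).mono' (hmeas.mul hg.aestronglyMeasurable) ?_
  filter_upwards [hdet] with y hy
  rw [norm_mul, Real.norm_eq_abs, abs_abs, Real.norm_of_nonneg (hg0 y)]
  exact mul_le_mul_of_nonneg_right hy (hg0 y)

lemma setIntegral_image_comp_le (hV : MeasurableSet V) (hβα : LeftInvOn β α V)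
    (hDα : ∀ y ∈ V, HasFDerivWithinAt α (Dα y) V y)
    (hdet : ∀ᵐ y ∂μ.restrict V, |(Dα y).det| ≤ D) (hg0 : 0 ≤ g) (hg : IntegrableOn g V μ) :
    ∫ x in α '' V, g (β x) ∂μ ≤ D * ∫ y in V, g y ∂μ := by
  rw [setIntegral_image_comp μ hV hβα hDα, ← integral_const_mul]
  refine integral_mono_of_nonneg (.of_forall fun y => mul_nonneg (abs_nonneg _) (hg0 y))
    (hg.const_mul D) ?_
  filter_upwards [hdet] with y hy
  exact mul_le_mul_of_nonneg_right hy (hg0 y)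

end AddHaar

lemma descFactorial_mul_factorial_rpow_eq {n k : ℕ} (hk : k ≤ n) {p c : ℝ} (hp : 0 < p)
    (hc : 0 < c) :
    (((n.descFactorial k : ℝ) * c ^ k) ^ p * (n.factorial * (1 / c) ^ n)) ^ (1 / p)
      = (n.factorial : ℝ) ^ ((p + 1) / p) / (n - k).factorial * c ^ ((p * k - n) / p) := by
  have hn : (0 : ℝ) < n.factorial := by positivity
  have hdesc : (n.descFactorial k : ℝ) = n.factorial / (n - k).factorial := by
    rw [eq_div_iff (by positivity), mul_comm]; exact_mod_cast Nat.factorial_mul_descFactorial hk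
  have hfac : (n.factorial : ℝ) ^ ((p + 1) / p) = n.factorial * (n.factorial : ℝ) ^ (1 / p) := by
    rw [show (p + 1) / p = 1 + 1 / p by field_simp, Real.rpow_add hn, Real.rpow_one]
  have hinv : ((1 / c) ^ n) ^ (1 / p) = c ^ (-(n / p)) := by
    rw [one_div_pow, Real.div_rpow zero_le_one (by positivity), Real.one_rpow,
      ← Real.rpow_natCast, ← Real.rpow_mul hc.le, Real.rpow_neg hc.le, mul_one_div, one_div]
  have hexp : c ^ ((p * k - n) / p) = c ^ k * c ^ (-(n / p)) := by
    rw [show (p * k - n) / p = k + -(n / p) by field_simp; ring, Real.rpow_add hc,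
      Real.rpow_natCast]
  rw [Real.mul_rpow (by positivity) (by positivity), one_div, Real.rpow_rpow_inv (by positivity)
    hp.ne', ← one_div, Real.mul_rpow hn.le (by positivity), hinv, hfac, hexp, hdesc]
  ring

section Pullback

variable {n k : ℕ} {p : ℝ} {V : Set (EuclideanSpace ℝ (Fin n))}
  {α β : EuclideanSpace ℝ (Fin n) → EuclideanSpace ℝ (Fin n)}
  {Dα Dβ : EuclideanSpace ℝ (Fin n) → EuclideanSpace ℝ (Fin n) →L[ℝ] EuclideanSpace ℝ (Fin n)}
  {ω : EuclideanSpace ℝ (Fin n) → {s : Finset (Fin n) // s.card = k} → ℝ}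

lemma integral_pullback_rpow_le (hp : 0 < p) {C D : ℝ} (hC : 0 ≤ C) (hV : MeasurableSet V)
    (hβα : LeftInvOn β α V) (hDα : ∀ y ∈ V, HasFDerivWithinAt α (Dα y) V y)
    (hdet : ∀ᵐ y ∂volume.restrict V, |(Dα y).det| ≤ D)
    (hDβ : ∀ᵐ x ∂volume.restrict (α '' V), ‖Dβ x‖ ≤ C)
    (hω : IntegrableOn (fun y => coeffNorm (ω y) ^ p) V) :
    ∫ x in α '' V, coeffNorm (fun i => ∑ j, ω (β x) j * jacMinor n k (Dβ x) i j) ^ p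
      ≤ ((n.descFactorial k : ℝ) * C ^ k) ^ p * D * ∫ y in V, coeffNorm (ω y) ^ p := by
  set K : ℝ := n.descFactorial k * C ^ k
  have hK : 0 ≤ K := by positivity
  have hg0 : 0 ≤ fun y => coeffNorm (ω y) ^ p := fun y => coeffNorm_rpow_nonneg _ p
  have hpointwise : ∀ᵐ x ∂volume.restrict (α '' V),
      coeffNorm (fun i => ∑ j, ω (β x) j * jacMinor n k (Dβ x) i j) ^ p
        ≤ K ^ p * coeffNorm (ω (β x)) ^ p := by
    filter_upwards [hDβ] with x hx
    rw [← Real.mul_rpow hK (coeffNorm_nonneg _)]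
    refine Real.rpow_le_rpow (coeffNorm_nonneg _) ((coeffNorm_pullback_le _ _).trans ?_) hp.le
    exact mul_le_mul_of_nonneg_right (by simp only [K]; gcongr) (coeffNorm_nonneg _)
  calc ∫ x in α '' V, coeffNorm (fun i => ∑ j, ω (β x) j * jacMinor n k (Dβ x) i j) ^ p
      ≤ ∫ x in α '' V, K ^ p * coeffNorm (ω (β x)) ^ p :=
        integral_mono_of_nonneg (.of_forall fun _ => coeffNorm_rpow_nonneg _ p)
          ((integrableOn_image_comp_of_abs_det_le volume hV hβα hDα hdet hg0 hω).const_mul _)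
          hpointwise
    _ = K ^ p * ∫ x in α '' V, coeffNorm (ω (β x)) ^ p := integral_const_mul _ _
    _ ≤ K ^ p * (D * ∫ y in V, coeffNorm (ω y) ^ p) := by
        refine mul_le_mul_of_nonneg_left ?_ (Real.rpow_nonneg hK p)
        exact setIntegral_image_comp_le volume hV hβα hDα hdet hg0 hω
    _ = K ^ p * D * ∫ y in V, coeffNorm (ω y) ^ p := by ring

end Pullback

lemma pullback_Lp_norm_le {n k : ℕ} (hk : k ≤ n) {p c : ℝ} (hp : 0 < p) (hc : 0 < c)
    {U V : Set (EuclideanSpace ℝ (Fin n))} (hU : MeasurableSet U) (hV : MeasurableSet V)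
    {β α : EuclideanSpace ℝ (Fin n) → EuclideanSpace ℝ (Fin n)}
    (hβ : MapsTo β U V) (hα : MapsTo α V U) (hinv : InvOn β α V U)
    (hβlip : ∀ x ∈ U, ∀ x' ∈ U, ‖β x - β x'‖ ≤ c * ‖x - x'‖)
    (hαlip : ∀ y ∈ V, ∀ y' ∈ V, ‖α y - α y'‖ ≤ (1 / c) * ‖y - y'‖)
    {Dβ Dα : EuclideanSpace ℝ (Fin n) → EuclideanSpace ℝ (Fin n) →L[ℝ] EuclideanSpace ℝ (Fin n)}
    (hDβ : ∀ x ∈ U, HasFDerivAt β (Dβ x) x) (hDα : ∀ y ∈ V, HasFDerivAt α (Dα y) y)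
    {ω : EuclideanSpace ℝ (Fin n) → {s : Finset (Fin n) // s.card = k} → ℝ}
    (hω : IntegrableOn (fun y => coeffNorm (ω y) ^ p) V) :
    (∫ x in U, coeffNorm (fun i => ∑ j, ω (β x) j * jacMinor n k (Dβ x) i j) ^ p) ^ (1 / p)
      ≤ (n.factorial : ℝ) ^ ((p + 1) / p) / (n - k).factorial * c ^ ((p * k - n) / p)
          * (∫ y in V, coeffNorm (ω y) ^ p) ^ (1 / p) := by
  have hUV : α '' V = U := (hinv.bijOn hα hβ).image_eq
  have hDβ_le := ae_norm_fderiv_le_of_norm_sub_le volume hU hDβ hc.le hβlip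
  have hDα_le := ae_norm_fderiv_le_of_norm_sub_le volume hV hDα (by positivity) hαlip
  have hdet : ∀ᵐ y ∂volume.restrict V, |(Dα y).det| ≤ n.factorial * (1 / c) ^ n := by
    filter_upwards [hDα_le] with y hy
    exact (abs_det_le _).trans (by gcongr)
  rw [← hUV] at hDβ_le
  have h := integral_pullback_rpow_le hp hc.le hV hinv.1
    (fun y hy => (hDα y hy).hasFDerivWithinAt) hdet hDβ_le hω
  rw [hUV] at h
  calc (∫ x in U, coeffNorm (fun i => ∑ j, ω (β x) j * jacMinor n k (Dβ x) i j) ^ p) ^ (1 / p)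
      ≤ (((n.descFactorial k : ℝ) * c ^ k) ^ p * (n.factorial * (1 / c) ^ n)
          * ∫ y in V, coeffNorm (ω y) ^ p) ^ (1 / p) :=
        Real.rpow_le_rpow (integral_nonneg fun _ => coeffNorm_rpow_nonneg _ p) h (by positivity)
    _ = _ := by
        rw [Real.mul_rpow (by positivity) (integral_nonneg fun _ => coeffNorm_rpow_nonneg _ p),
          descFactorial_mul_factorial_rpow_eq hk hp hc]

theorem pullback_Lp_norm_bound_general (n k : ℕ) (hk : k ≤ n) (p C : ℝ) (hp : 1 ≤ p) (hC : 0 < C)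
    (U V : Set (EuclideanSpace ℝ (Fin n))) (hUm : MeasurableSet U) (hVm : MeasurableSet V)
    (β α : EuclideanSpace ℝ (Fin n) → EuclideanSpace ℝ (Fin n))
    (hβV : ∀ x ∈ U, β x ∈ V) (hαU : ∀ y ∈ V, α y ∈ U)
    (hαβ : ∀ x ∈ U, α (β x) = x) (hβα : ∀ y ∈ V, β (α y) = y)
    (hβlip : ∀ x ∈ U, ∀ x' ∈ U, ‖β x - β x'‖ ≤ C * ‖x - x'‖)
    (hαlip : ∀ y ∈ V, ∀ y' ∈ V, ‖α y - α y'‖ ≤ (1 / C) * ‖y - y'‖)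
    (Dβ : EuclideanSpace ℝ (Fin n) → EuclideanSpace ℝ (Fin n) →L[ℝ] EuclideanSpace ℝ (Fin n))
    (Dα : EuclideanSpace ℝ (Fin n) → EuclideanSpace ℝ (Fin n) →L[ℝ] EuclideanSpace ℝ (Fin n))
    (hDβ : ∀ x ∈ U, HasFDerivAt β (Dβ x) x) (hDα : ∀ y ∈ V, HasFDerivAt α (Dα y) y)
    (ω η : EuclideanSpace ℝ (Fin n) → {s : Finset (Fin n) // s.card = k} → ℝ)
    (hωint : IntegrableOn (fun y => coeffNorm (ω y) ^ p) V)
    (hηint : IntegrableOn (fun x => coeffNorm (η x) ^ p) U) :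
    (∫ x in U, coeffNorm (fun i => ∑ j, ω (β x) j * jacMinor n k (Dβ x) i j) ^ p) ^ (1 / p)
        ≤ ((n.factorial : ℝ) ^ ((p + 1) / p) / ((n - k).factorial : ℝ)) *
            C ^ ((p * k - n) / p) * (∫ y in V, coeffNorm (ω y) ^ p) ^ (1 / p) ∧
    (∫ y in V, coeffNorm (fun i => ∑ j, η (α y) j * jacMinor n k (Dα y) i j) ^ p) ^ (1 / p)
        ≤ ((n.factorial : ℝ) ^ ((p + 1) / p) / ((n - k).factorial : ℝ)) *
            C ^ ((n - p * k) / p) * (∫ x in U, coeffNorm (η x) ^ p) ^ (1 / p) := by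
  have hp₀ : 0 < p := zero_lt_one.trans_le hp
  refine ⟨pullback_Lp_norm_le hk hp₀ hC hUm hVm hβV hαU ⟨hβα, hαβ⟩ hβlip hαlip hDβ hDα hωint, ?_⟩
  have h := pullback_Lp_norm_le hk hp₀ (one_div_pos.2 hC) hVm hUm hαU hβV ⟨hαβ, hβα⟩ hαlip
    (by simpa only [one_div_one_div] using hβlip) hDα hDβ hηint
  have hexp : (1 / C) ^ ((p * k - n) / p) = C ^ ((n - p * k) / p) := by
    rw [one_div, Real.inv_rpow hC.le, ← Real.rpow_neg hC.le, ← neg_div, neg_sub]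
  rwa [hexp] at h

/-- **Bounds for the pull-back operators under a `C`-bi-Lipschitz homeomorphism.**
If `β : U → V` is `C`-Lipschitz with inverse `α : V → U` that is `(1/C)`-Lipschitz
(both differentiable on their domains), then the pull-back on `L^p` `k`-forms satisfies
`‖β*ω‖_{L^p(U)} ≤ (n!^{(p+1)/p}/(n-k)!) C^{(pk-n)/p} ‖ω‖_{L^p(V)}` and
`‖α*η‖_{L^p(V)} ≤ (n!^{(p+1)/p}/(n-k)!) C^{(n-pk)/p} ‖η‖_{L^p(U)}`. -/
theorem pullback_Lp_norm_bound (n k : ℕ) (hk : k ≤ n) (p C : ℝ) (hp : 1 ≤ p) (hC : 0 < C)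
    (U V : Set (EuclideanSpace ℝ (Fin n))) (hUm : MeasurableSet U) (hVm : MeasurableSet V)
    (β α : EuclideanSpace ℝ (Fin n) → EuclideanSpace ℝ (Fin n))
    (hβV : ∀ x ∈ U, β x ∈ V) (hαU : ∀ y ∈ V, α y ∈ U)
    (hαβ : ∀ x ∈ U, α (β x) = x) (hβα : ∀ y ∈ V, β (α y) = y)
    (hβlip : ∀ x ∈ U, ∀ x' ∈ U, ‖β x - β x'‖ ≤ C * ‖x - x'‖)
    (hαlip : ∀ y ∈ V, ∀ y' ∈ V, ‖α y - α y'‖ ≤ (1 / C) * ‖y - y'‖)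
    (Dβ : EuclideanSpace ℝ (Fin n) → EuclideanSpace ℝ (Fin n) →L[ℝ] EuclideanSpace ℝ (Fin n))
    (Dα : EuclideanSpace ℝ (Fin n) → EuclideanSpace ℝ (Fin n) →L[ℝ] EuclideanSpace ℝ (Fin n))
    (hDβ : ∀ x ∈ U, HasFDerivAt β (Dβ x) x) (hDα : ∀ y ∈ V, HasFDerivAt α (Dα y) y)
    (ω η : EuclideanSpace ℝ (Fin n) → {s : Finset (Fin n) // s.card = k} → ℝ)
    (hωmeas : ∀ j, Measurable fun y => ω y j) (hηmeas : ∀ j, Measurable fun x => η x j)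
    (hωint : IntegrableOn (fun y => coeffNorm (ω y) ^ p) V)
    (hηint : IntegrableOn (fun x => coeffNorm (η x) ^ p) U) :
    (∫ x in U, coeffNorm (fun i => ∑ j, ω (β x) j * jacMinor n k (Dβ x) i j) ^ p) ^ (1 / p)
        ≤ ((n.factorial : ℝ) ^ ((p + 1) / p) / ((n - k).factorial : ℝ)) *
            C ^ ((p * k - n) / p) * (∫ y in V, coeffNorm (ω y) ^ p) ^ (1 / p) ∧
    (∫ y in V, coeffNorm (fun i => ∑ j, η (α y) j * jacMinor n k (Dα y) i j) ^ p) ^ (1 / p)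
        ≤ ((n.factorial : ℝ) ^ ((p + 1) / p) / ((n - k).factorial : ℝ)) *
            C ^ ((n - p * k) / p) * (∫ x in U, coeffNorm (η x) ^ p) ^ (1 / p) :=
  pullback_Lp_norm_bound_general n k hk p C hp hC U V hUm hVm β α hβV hαU hαβ hβα hβlip hαlip Dβ Dα
    hDβ hDα ω η hωint hηint
end
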